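/- The marginal is the unique minimizer of the averaged rate term: Let μ be a probability measure on a measurable space X, let κ : X → Measure Z be a Markov kernel into a standard Borel (or countably generated) measurable space Z, and let m := μ.bind κ be the mixture (marginal) measure. Assume ∫_X D_KL(κ x ‖ m) dμ(x) < ∞. Then for every probability measure q on Z with q ≠ m and ∫_X D_KL(κ x ‖ q) dμ(x) < ∞, one has the strict inequality ∫_X D_KL(κ x ‖ q) dμ(x) > ∫_X D_KL(κ x ‖ m) dμ(x). Equivalently, equality of the two averaged divergences holds if and only if q = m. -/

import Mathlib

/-!
The log-likelihood ratios chain: `llr (κ x) q = llr (κ x) m + llr m q` holds `κ x`-a.e., and `m` is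
the `μ`-average of the `κ x`. Integrating therefore gives the compensation identity
`∫ D(κ x ‖ q) dμ = ∫ D(κ x ‖ m) dμ + D(m ‖ q)`, and `D(m ‖ q) > 0` for `q ≠ m` by Gibbs'
inequality. The identity is computed with real integrals: the negative part of a log-likelihood
ratio always has integral at most one, so finite averaged divergences make every log-likelihood
ratio involved integrable.
-/

open MeasureTheory ProbabilityTheory
open scoped ENNReal

/-- Kullback–Leibler divergence of `P` from `Q`: `∫ log (dP/dQ) dP` when `P ≪ Q`
(and the log-density is integrable), and `+∞` otherwise. -/
noncomputable def klDiv {α : Type*} [MeasurableSpace α] (P Q : Measure α) : ℝ≥0∞ :=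
  open Classical in
  if P ≪ Q ∧ Integrable (fun a => Real.log ((P.rnDeriv Q a).toReal)) P
  then ENNReal.ofReal (∫ a, Real.log ((P.rnDeriv Q a).toReal) ∂P)
  else ⊤

lemma klDiv_eq_informationTheory_klDiv {Z : Type*} [MeasurableSpace Z] (P Q : Measure Z)
    [IsProbabilityMeasure P] [IsProbabilityMeasure Q] :
    klDiv P Q = InformationTheory.klDiv P Q := by
  rw [InformationTheory.klDiv_def]
  simp only [klDiv, llr_def, probReal_univ, add_sub_cancel_right]
  split_ifs with h <;> simp [h]

lemma Real.enorm_eq_ofReal_add_ofReal_neg (x : ℝ) :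
    ‖x‖ₑ = ENNReal.ofReal x + ENNReal.ofReal (-x) := by
  rcases le_total 0 x with hx | hx
  · simp [Real.enorm_eq_ofReal hx, ENNReal.ofReal_of_nonpos (neg_nonpos.mpr hx)]
  · rw [← enorm_neg, Real.enorm_eq_ofReal (neg_nonneg.mpr hx), ENNReal.ofReal_of_nonpos hx,
      zero_add]

lemma ENNReal.mul_ofReal_neg_log_toReal_le_one (r : ℝ≥0∞) :
    r * ENNReal.ofReal (-Real.log r.toReal) ≤ 1 := by
  rcases eq_or_ne r ⊤ with rfl | hr
  · simp
  have := Real.self_sub_one_le_mul_log (ENNReal.toReal_nonneg (a := r))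
  calc r * ENNReal.ofReal (-Real.log r.toReal)
      = ENNReal.ofReal (r.toReal * -Real.log r.toReal) := by
        rw [ENNReal.ofReal_mul ENNReal.toReal_nonneg, ENNReal.ofReal_toReal hr]
    _ ≤ 1 := ENNReal.ofReal_le_one.mpr (by nlinarith [ENNReal.toReal_nonneg (a := r)])

namespace MeasureTheory

variable {X Z E : Type*} [MeasurableSpace X] [MeasurableSpace Z]
  [NormedAddCommGroup E] [NormedSpace ℝ E] {μ : Measure X} {κ : Kernel X Z} {f : Z → E}

lemma Integrable.integral_comp_measure (hf : Integrable f (κ ∘ₘ μ)) :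
    Integrable (fun x ↦ ∫ z, f z ∂κ x) μ := by
  rw [Measure.comp_eq_comp_const_apply] at hf
  simpa using hf.integral_comp

lemma Measure.integral_comp (hf : Integrable f (κ ∘ₘ μ)) :
    ∫ z, f z ∂(κ ∘ₘ μ) = ∫ x, ∫ z, f z ∂κ x ∂μ := by
  rw [Measure.comp_eq_comp_const_apply] at hf ⊢
  simpa using Kernel.integral_comp hf

end MeasureTheory

namespace InformationTheory

section LogLikelihoodRatio

variable {Z : Type*} [MeasurableSpace Z]

lemma lintegral_ofReal_neg_llr_le (P Q : Measure Z) [P.HaveLebesgueDecomposition Q] (h : P ≪ Q) :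
    ∫⁻ z, ENNReal.ofReal (-llr P Q z) ∂P ≤ Q Set.univ := by
  rw [← lintegral_rnDeriv_mul h (f := fun z ↦ ENNReal.ofReal (-llr P Q z))
    (measurable_llr P Q).neg.ennreal_ofReal.aemeasurable]
  calc ∫⁻ z, P.rnDeriv Q z * ENNReal.ofReal (-llr P Q z) ∂Q
      ≤ ∫⁻ _, 1 ∂Q := lintegral_mono fun z ↦ ENNReal.mul_ofReal_neg_log_toReal_le_one _
    _ = Q Set.univ := lintegral_one

lemma lintegral_enorm_llr_le (P Q : Measure Z) [IsProbabilityMeasure P] [IsProbabilityMeasure Q] :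
    ∫⁻ z, ‖llr P Q z‖ₑ ∂P ≤ klDiv P Q + 2 := by
  by_cases hPQ : klDiv P Q = ∞
  · simp [hPQ]
  obtain ⟨hac, hint⟩ := klDiv_ne_top_iff.mp hPQ
  set A := ∫⁻ z, ENNReal.ofReal (llr P Q z) ∂P
  set B := ∫⁻ z, ENNReal.ofReal (-llr P Q z) ∂P
  have hB : B ≤ 1 := by simpa using lintegral_ofReal_neg_llr_le P Q hac
  have hB_ne_top : B ≠ ∞ := (hB.trans_lt ENNReal.one_lt_top).ne
  have hsplit : ∫⁻ z, ‖llr P Q z‖ₑ ∂P = A + B := by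
    simp_rw [Real.enorm_eq_ofReal_add_ofReal_neg]
    exact lintegral_add_left (measurable_llr P Q).ennreal_ofReal _
  have hA_ne_top : A ≠ ∞ :=
    ne_top_of_le_ne_top hint.hasFiniteIntegral.ne (hsplit ▸ le_self_add)
  have hA : A ≤ klDiv P Q + B := by
    rw [klDiv_of_ac_of_integrable hac hint,
      integral_eq_lintegral_pos_part_sub_lintegral_neg_part hint]
    simp only [probReal_univ, add_sub_cancel_right]
    calc A = ENNReal.ofReal (A.toReal - B.toReal + B.toReal) := by
          rw [sub_add_cancel, ENNReal.ofReal_toReal hA_ne_top]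
      _ ≤ ENNReal.ofReal (A.toReal - B.toReal) + ENNReal.ofReal B.toReal := ENNReal.ofReal_add_le
      _ = ENNReal.ofReal (A.toReal - B.toReal) + B := by rw [ENNReal.ofReal_toReal hB_ne_top]
  calc ∫⁻ z, ‖llr P Q z‖ₑ ∂P = A + B := hsplit
    _ ≤ klDiv P Q + B + B := by gcongr
    _ ≤ klDiv P Q + 1 + 1 := by gcongr
    _ = klDiv P Q + 2 := by rw [add_assoc, one_add_one_eq_two]

lemma llr_ae_eq_llr_add_llr {P R Q : Measure Z} [SigmaFinite P] [SigmaFinite R] [SigmaFinite Q]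
    (hPR : P ≪ R) (hRQ : R ≪ Q) :
    llr P Q =ᵐ[P] llr P R + llr R Q := by
  have hmul := (hPR.trans hRQ).ae_le (Measure.rnDeriv_mul_rnDeriv (κ := Q) hPR)
  filter_upwards [hmul, Measure.rnDeriv_pos hPR, hPR.ae_le (Measure.rnDeriv_lt_top P R),
    hPR.ae_le (Measure.rnDeriv_pos hRQ), (hPR.trans hRQ).ae_le (Measure.rnDeriv_lt_top R Q)]
    with z hz hPR_pos hPR_lt hRQ_pos hRQ_lt
  simp only [llr, Pi.add_apply]
  rw [← hz, Pi.mul_apply, ENNReal.toReal_mul, Real.log_mul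
    (ENNReal.toReal_pos hPR_pos.ne' hPR_lt.ne).ne' (ENNReal.toReal_pos hRQ_pos.ne' hRQ_lt.ne).ne']

lemma toReal_klDiv_eq_toReal_klDiv_add_integral_llr {P R Q : Measure Z}
    [IsProbabilityMeasure P] [IsProbabilityMeasure R] [IsProbabilityMeasure Q]
    (hPQ : klDiv P Q ≠ ∞) (hPR : klDiv P R ≠ ∞) (hRQ : R ≪ Q) :
    (klDiv P Q).toReal = (klDiv P R).toReal + ∫ z, llr R Q z ∂P := by
  obtain ⟨hPQ_ac, hPQ_int⟩ := klDiv_ne_top_iff.mp hPQ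
  obtain ⟨hPR_ac, hPR_int⟩ := klDiv_ne_top_iff.mp hPR
  have hchain := llr_ae_eq_llr_add_llr hPR_ac hRQ
  have hRQ_int : Integrable (llr R Q) P :=
    (hPQ_int.sub hPR_int).congr (hchain.mono fun z hz ↦ by simp [hz])
  rw [toReal_klDiv_of_measure_eq hPQ_ac (by simp), toReal_klDiv_of_measure_eq hPR_ac (by simp),
    ← integral_add hPR_int hRQ_int]
  exact integral_congr_ae hchain

end LogLikelihoodRatio

lemma _root_.ProbabilityTheory.Kernel.measurable_klDiv {X Z : Type*} [MeasurableSpace X]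
    [MeasurableSpace Z] [MeasurableSpace.CountableOrCountablyGenerated X Z]
    (κ η : Kernel X Z) [IsFiniteKernel κ] [IsFiniteKernel η] :
    Measurable fun x ↦ klDiv (κ x) (η x) := by
  classical
  have hform : (fun x ↦ klDiv (κ x) (η x)) = fun x ↦ if κ x ≪ η x
      then ∫⁻ z, ENNReal.ofReal (klFun (κ.rnDeriv η x z).toReal) ∂η x else ∞ := by
    ext x
    rw [klDiv_eq_lintegral_klFun]
    refine if_congr Iff.rfl (lintegral_congr_ae ?_) rfl
    filter_upwards [Kernel.rnDeriv_eq_rnDeriv_measure (κ := κ) (η := η) (a := x)] with z hz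
    rw [hz]
  rw [hform]
  refine Measurable.ite (Kernel.measurableSet_absolutelyContinuous κ η) ?_ measurable_const
  exact Measurable.lintegral_kernel_prod_right
    (measurable_klFun.comp (Kernel.measurable_rnDeriv κ η).ennreal_toReal).ennreal_ofReal

lemma _root_.ProbabilityTheory.Kernel.measurable_klDiv_const {X Z : Type*} [MeasurableSpace X]
    [MeasurableSpace Z] [MeasurableSpace.CountableOrCountablyGenerated X Z]
    (κ : Kernel X Z) [IsFiniteKernel κ] (ν : Measure Z) [IsFiniteMeasure ν] :
    Measurable fun x ↦ klDiv (κ x) ν := by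
  simpa using Kernel.measurable_klDiv κ (Kernel.const X ν)

section Mixture

variable {X Z : Type*} [MeasurableSpace X] [MeasurableSpace Z]
  [MeasurableSpace.CountablyGenerated Z] {μ : Measure X} [IsProbabilityMeasure μ]
  {κ : Kernel X Z} [IsMarkovKernel κ] {q : Measure Z} [IsProbabilityMeasure q]

lemma integrable_llr_comp (hm : ∫⁻ x, klDiv (κ x) (κ ∘ₘ μ) ∂μ ≠ ∞)
    (hq : ∫⁻ x, klDiv (κ x) q ∂μ ≠ ∞) (hκm : ∀ᵐ x ∂μ, κ x ≪ κ ∘ₘ μ) (hmq : κ ∘ₘ μ ≪ q) :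
    Integrable (llr (κ ∘ₘ μ) q) (κ ∘ₘ μ) := by
  refine ⟨(measurable_llr _ _).aestronglyMeasurable, ?_⟩
  have hbound : ∀ᵐ x ∂μ, ∫⁻ z, ‖llr (κ ∘ₘ μ) q z‖ₑ ∂κ x ≤
      (klDiv (κ x) q + 2) + (klDiv (κ x) (κ ∘ₘ μ) + 2) := by
    filter_upwards [hκm] with x hx
    calc ∫⁻ z, ‖llr (κ ∘ₘ μ) q z‖ₑ ∂κ x
        ≤ ∫⁻ z, ‖llr (κ x) q z‖ₑ + ‖llr (κ x) (κ ∘ₘ μ) z‖ₑ ∂κ x := by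
          refine lintegral_mono_ae ((llr_ae_eq_llr_add_llr hx hmq).mono fun z hz ↦ ?_)
          rw [hz, Pi.add_apply]
          simpa using enorm_sub_le (a := llr (κ x) (κ ∘ₘ μ) z + llr (κ ∘ₘ μ) q z)
            (b := llr (κ x) (κ ∘ₘ μ) z)
      _ = ∫⁻ z, ‖llr (κ x) q z‖ₑ ∂κ x + ∫⁻ z, ‖llr (κ x) (κ ∘ₘ μ) z‖ₑ ∂κ x :=
          lintegral_add_left (measurable_llr _ _).enorm _
      _ ≤ _ := add_le_add (lintegral_enorm_llr_le _ _) (lintegral_enorm_llr_le _ _)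
  calc ∫⁻ z, ‖llr (κ ∘ₘ μ) q z‖ₑ ∂(κ ∘ₘ μ)
      = ∫⁻ x, ∫⁻ z, ‖llr (κ ∘ₘ μ) q z‖ₑ ∂κ x ∂μ :=
        Measure.lintegral_bind κ.aemeasurable (measurable_llr _ _).enorm.aemeasurable
    _ ≤ ∫⁻ x, (klDiv (κ x) q + 2) + (klDiv (κ x) (κ ∘ₘ μ) + 2) ∂μ := lintegral_mono_ae hbound
    _ < ∞ := by
      rw [lintegral_add_left ((κ.measurable_klDiv_const q).add_const 2),
        lintegral_add_right _ measurable_const, lintegral_add_right _ measurable_const]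
      simp [hm, hq, lt_top_iff_ne_top]

theorem lintegral_klDiv_eq_lintegral_klDiv_comp_add (hm : ∫⁻ x, klDiv (κ x) (κ ∘ₘ μ) ∂μ ≠ ∞)
    (hq : ∫⁻ x, klDiv (κ x) q ∂μ ≠ ∞) :
    ∫⁻ x, klDiv (κ x) q ∂μ = ∫⁻ x, klDiv (κ x) (κ ∘ₘ μ) ∂μ + klDiv (κ ∘ₘ μ) q := by
  have hm_meas := κ.measurable_klDiv_const (κ ∘ₘ μ)
  have hq_meas := κ.measurable_klDiv_const q
  have hκm := ae_lt_top hm_meas hm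
  have hκq := ae_lt_top hq_meas hq
  have hmq : κ ∘ₘ μ ≪ q := by
    simpa using Measure.AbsolutelyContinuous.comp_left μ (η := Kernel.const X q)
      (hκq.mono fun x hx ↦ (klDiv_ne_top_iff.mp hx.ne).1)
  have hint := integrable_llr_comp hm hq (hκm.mono fun x hx ↦ (klDiv_ne_top_iff.mp hx.ne).1) hmq
  have hmq_ne_top : klDiv (κ ∘ₘ μ) q ≠ ∞ := klDiv_ne_top hmq hint
  have htoReal : (∫⁻ x, klDiv (κ x) q ∂μ).toReal =
      (∫⁻ x, klDiv (κ x) (κ ∘ₘ μ) ∂μ).toReal + (klDiv (κ ∘ₘ μ) q).toReal := by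
    rw [← integral_toReal hq_meas.aemeasurable hκq, ← integral_toReal hm_meas.aemeasurable hκm,
      toReal_klDiv_of_measure_eq hmq (by simp), Measure.integral_comp hint,
      ← integral_add (integrable_toReal_of_lintegral_ne_top hm_meas.aemeasurable hm)
        hint.integral_comp_measure]
    refine integral_congr_ae ?_
    filter_upwards [hκm, hκq] with x hxm hxq
    exact toReal_klDiv_eq_toReal_klDiv_add_integral_llr hxq.ne hxm.ne hmq
  rwa [← ENNReal.toReal_add hm hmq_ne_top,
    ENNReal.toReal_eq_toReal_iff' hq (ENNReal.add_ne_top.mpr ⟨hm, hmq_ne_top⟩)] at htoReal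

end Mixture

end InformationTheory

/-- The marginal `m = μ.bind κ` is the unique minimizer of the averaged rate term:
any probability measure `q ≠ m` with finite averaged divergence yields a strictly larger
averaged KL divergence. -/
theorem marginal_unique_minimizer_of_averaged_rate
    {X Z : Type*} [MeasurableSpace X] [MeasurableSpace Z] [StandardBorelSpace Z]
    (μ : Measure X) [IsProbabilityMeasure μ]
    (κ : Kernel X Z) [IsMarkovKernel κ]
    (m : Measure Z) (hm : m = μ.bind (fun x => κ x))
    (hfin : ∫⁻ x, klDiv (κ x) m ∂μ < ⊤) :
    ∀ q : Measure Z, IsProbabilityMeasure q → q ≠ m →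
      ∫⁻ x, klDiv (κ x) q ∂μ < ⊤ →
      ∫⁻ x, klDiv (κ x) q ∂μ > ∫⁻ x, klDiv (κ x) m ∂μ := by
  intro q hq hqm hqfin
  subst hm
  simp only [klDiv_eq_informationTheory_klDiv] at hfin hqfin ⊢
  rw [gt_iff_lt, InformationTheory.lintegral_klDiv_eq_lintegral_klDiv_comp_add hfin.ne hqfin.ne]
  exact ENNReal.lt_add_right hfin.ne (InformationTheory.klDiv_eq_zero_iff.not.mpr hqm.symm)
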